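/- Suppose E‖Z_1‖² < ∞ and set μ = E[Z_1]. Then n^{-1} L_n → 2‖μ‖ almost surely as n → ∞. -/

import Mathlib

open MeasureTheory ProbabilityTheory Filter
open scoped RealInnerProductSpace

/-- The unit vector `(cos θ, sin θ)` in the plane. -/
noncomputable def dir (θ : ℝ) : EuclideanSpace ℝ (Fin 2) :=
  (EuclideanSpace.equiv (Fin 2) ℝ).symm ![Real.cos θ, Real.sin θ]

/-- The random walk with increments `Z`: `walk Z n ω = Z 0 ω + ⋯ + Z (n-1) ω`. -/
noncomputable def walk {Ω : Type*} (Z : ℕ → Ω → EuclideanSpace ℝ (Fin 2)) (n : ℕ) (ω : Ω) :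
    EuclideanSpace ℝ (Fin 2) :=
  ∑ i ∈ Finset.range n, Z i ω

/-- Perimeter length of the convex hull of `S 0, …, S n`, via Cauchy's formula. -/
noncomputable def perim {Ω : Type*} (Z : ℕ → Ω → EuclideanSpace ℝ (Fin 2)) (n : ℕ) (ω : Ω) : ℝ :=
  ∫ θ in (0:ℝ)..Real.pi,
    (((Finset.range (n+1)).sup' Finset.nonempty_range_add_one
        (fun i => ⟪walk Z i ω, dir θ⟫))
      - ((Finset.range (n+1)).inf' Finset.nonempty_range_add_one
        (fun i => ⟪walk Z i ω, dir θ⟫)))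

/-!
By the strong law of large numbers, `S_n / n → μ` almost surely, so `S_i` stays within `o(n)` of
the straight walk `i • μ` for all `i ≤ n`. Each term `max - min` in Cauchy's formula is
2-Lipschitz in the sup distance between the point sets, and for the straight walk it equals
`n |⟪μ, e_θ⟫|`, whose integral over `[0, π]` is `2 n ‖μ‖`.
-/

open Finset Topology

noncomputable def width (f : ℕ → ℝ) (n : ℕ) : ℝ :=
  (range (n + 1)).sup' nonempty_range_add_one f - (range (n + 1)).inf' nonempty_range_add_one f

lemma abs_width_sub_width_le {f g : ℕ → ℝ} {n : ℕ} {δ : ℝ}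
    (h : ∀ i ≤ n, |f i - g i| ≤ δ) : |width f n - width g n| ≤ 2 * δ := by
  have h' : ∀ i ∈ range (n + 1), |f i - g i| ≤ δ := fun i hi =>
    h i (Nat.lt_succ_iff.mp (mem_range.mp hi))
  have hsup : |(range (n + 1)).sup' nonempty_range_add_one f
      - (range (n + 1)).sup' nonempty_range_add_one g| ≤ δ := by
    rw [abs_sub_le_iff, sub_le_iff_le_add, sub_le_iff_le_add]
    constructor <;> refine sup'_le _ _ fun i hi => ?_ <;> have := abs_sub_le_iff.mp (h' i hi)
    · linarith [le_sup' g hi]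
    · linarith [le_sup' f hi]
  have hinf : |(range (n + 1)).inf' nonempty_range_add_one f
      - (range (n + 1)).inf' nonempty_range_add_one g| ≤ δ := by
    rw [abs_sub_le_iff, sub_le_comm, sub_le_comm (a := inf' _ _ g)]
    constructor <;> refine le_inf' _ _ fun i hi => ?_ <;> have := abs_sub_le_iff.mp (h' i hi)
    · linarith [inf'_le f hi]
    · linarith [inf'_le g hi]
  calc |width f n - width g n|
      = |(range (n + 1)).sup' nonempty_range_add_one f
          - (range (n + 1)).sup' nonempty_range_add_one g
        - ((range (n + 1)).inf' nonempty_range_add_one f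
          - (range (n + 1)).inf' nonempty_range_add_one g)| := by
        unfold width; ring_nf
    _ ≤ δ + δ := (abs_sub _ _).trans (add_le_add hsup hinf)
    _ = 2 * δ := by ring

lemma width_natCast_mul (c : ℝ) (n : ℕ) : width (fun i => i * c) n = n * |c| := by
  have h0 : 0 ∈ range (n + 1) := mem_range.mpr n.succ_pos
  have hn : n ∈ range (n + 1) := self_mem_range_succ n
  apply le_antisymm
  · obtain ⟨i, hi, hsup⟩ := exists_mem_eq_sup' nonempty_range_add_one fun i : ℕ => i * c
    obtain ⟨j, hj, hinf⟩ := exists_mem_eq_inf' nonempty_range_add_one fun i : ℕ => i * c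
    have hi' : (i : ℝ) ≤ n := by exact_mod_cast Nat.lt_succ_iff.mp (mem_range.mp hi)
    have hj' : (j : ℝ) ≤ n := by exact_mod_cast Nat.lt_succ_iff.mp (mem_range.mp hj)
    calc width (fun i => i * c) n = (i - j) * c := by rw [width, hsup, hinf]; ring
      _ ≤ |(i - j : ℝ)| * |c| := by rw [← abs_mul]; exact le_abs_self _
      _ ≤ n * |c| := by
        gcongr
        rw [abs_sub_le_iff]
        constructor <;> linarith [j.cast_nonneg (α := ℝ), i.cast_nonneg (α := ℝ)]
  · have hsup := le_sup' (fun i : ℕ => i * c) hn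
    have hsup0 := le_sup' (fun i : ℕ => i * c) h0
    have hinf := inf'_le (fun i : ℕ => i * c) hn
    have hinf0 := inf'_le (fun i : ℕ => i * c) h0
    simp only [Nat.cast_zero, zero_mul] at hsup0 hinf0
    rw [width]
    rcases abs_cases c with ⟨hc, -⟩ | ⟨hc, -⟩ <;> rw [hc] <;> linarith

lemma continuous_width {F : ℕ → ℝ → ℝ} (hF : ∀ i, Continuous (F i)) (n : ℕ) :
    Continuous fun θ => width (fun i => F i θ) n :=
  (Continuous.finset_sup'_apply _ fun i _ => hF i).sub
    (Continuous.finset_inf'_apply _ fun i _ => hF i)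

lemma tendsto_sup'_range_div_of_tendsto_div {b : ℕ → ℝ}
    (h : Tendsto (fun n => b n / n) atTop (𝓝 0)) :
    Tendsto (fun n => (range (n + 1)).sup' nonempty_range_add_one b / n) atTop (𝓝 0) := by
  rw [tendsto_order]
  refine ⟨fun a ha => (h.eventually (lt_mem_nhds ha)).mono fun n hn =>
    hn.trans_le (div_le_div_of_nonneg_right (le_sup' b (self_mem_range_succ n)) n.cast_nonneg),
    fun a ha => ?_⟩
  obtain ⟨N, hN⟩ := eventually_atTop.mp
    ((h.eventually (gt_mem_nhds (half_pos ha))).and (eventually_gt_atTop 0))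
  set C := |(range (N + 1)).sup' nonempty_range_add_one b|
  have hb : ∀ i, b i ≤ C + a / 2 * i := by
    intro i
    rcases le_or_gt i N with hi | hi
    · have := (le_sup' b (mem_range_succ_iff.mpr hi)).trans (le_abs_self _)
      have : 0 ≤ a / 2 * i := by positivity
      linarith
    · obtain ⟨hbi, hi0⟩ := hN i hi.le
      have : b i < a / 2 * i := (div_lt_iff₀ (by exact_mod_cast hi0)).mp hbi
      linarith [abs_nonneg ((range (N + 1)).sup' nonempty_range_add_one b)]
  filter_upwards [(tendsto_const_div_atTop_nhds_zero_nat C).eventually (gt_mem_nhds (half_pos ha)),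
    eventually_gt_atTop 0] with n hC hn
  have hn' : (0 : ℝ) < n := by exact_mod_cast hn
  have hsup : (range (n + 1)).sup' nonempty_range_add_one b ≤ C + a / 2 * n :=
    sup'_le _ _ fun i hi => (hb i).trans (by gcongr; exact_mod_cast mem_range_succ_iff.mp hi)
  calc (range (n + 1)).sup' nonempty_range_add_one b / n ≤ C / n + a / 2 := by
        rw [div_add' _ _ _ hn'.ne']; gcongr
    _ < a := by linarith

lemma inner_dir (x : EuclideanSpace ℝ (Fin 2)) (θ : ℝ) :
    ⟪x, dir θ⟫ = x 0 * Real.cos θ + x 1 * Real.sin θ := by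
  simp [dir, PiLp.inner_apply, Fin.sum_univ_two, RCLike.inner_apply]
  ring

lemma norm_dir (θ : ℝ) : ‖dir θ‖ = 1 := by
  rw [EuclideanSpace.norm_eq]
  simp [dir]

lemma continuous_inner_dir (x : EuclideanSpace ℝ (Fin 2)) : Continuous fun θ => ⟪x, dir θ⟫ := by
  simp only [inner_dir]; fun_prop

lemma exists_inner_dir_eq_norm_mul_cos (x : EuclideanSpace ℝ (Fin 2)) :
    ∃ φ, ∀ θ, ⟪x, dir θ⟫ = ‖x‖ * Real.cos (θ - φ) := by
  set z := Complex.orthonormalBasisOneI.repr.symm x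
  have hz : ‖z‖ = ‖x‖ := LinearIsometryEquiv.norm_map _ x
  refine ⟨Complex.arg z, fun θ => ?_⟩
  have hre : ‖x‖ * Real.cos z.arg = x 0 := by
    rw [← hz, Complex.norm_mul_cos_arg]; simp [z]
  have him : ‖x‖ * Real.sin z.arg = x 1 := by
    rw [← hz, Complex.norm_mul_sin_arg]; simp [z]
  rw [inner_dir, Real.cos_sub]
  linear_combination Real.cos θ * hre.symm + Real.sin θ * him.symm

lemma integral_abs_cos_sub (φ : ℝ) : ∫ θ in (0:ℝ)..Real.pi, |Real.cos (θ - φ)| = 2 := by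
  have hper : Function.Periodic (fun u => |Real.cos u|) Real.pi := fun u => by
    simp [Real.cos_add_pi]
  rw [intervalIntegral.integral_comp_sub_right (fun u => |Real.cos u|) φ, zero_sub,
    show Real.pi - φ = -φ + Real.pi by ring, hper.intervalIntegral_add_eq (-φ) (-(Real.pi / 2)),
    show -(Real.pi / 2) + Real.pi = Real.pi / 2 by ring,
    intervalIntegral.integral_congr (g := Real.cos) fun u hu => abs_of_nonneg
      (Real.cos_nonneg_of_mem_Icc (by rwa [Set.uIcc_of_le (by linarith [Real.pi_pos])] at hu)),
    integral_cos]
  norm_num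

lemma integral_abs_inner_dir (x : EuclideanSpace ℝ (Fin 2)) :
    ∫ θ in (0:ℝ)..Real.pi, |⟪x, dir θ⟫| = 2 * ‖x‖ := by
  obtain ⟨φ, hφ⟩ := exists_inner_dir_eq_norm_mul_cos x
  simp only [hφ, abs_mul, abs_norm, intervalIntegral.integral_const_mul, integral_abs_cos_sub]
  ring

section Walk

variable {Ω : Type*} (Z : ℕ → Ω → EuclideanSpace ℝ (Fin 2)) (ω : Ω)

lemma perim_eq_integral_width (n : ℕ) :
    perim Z n ω = ∫ θ in (0:ℝ)..Real.pi, width (fun i => ⟪walk Z i ω, dir θ⟫) n :=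
  rfl

lemma abs_perim_sub_le (m : EuclideanSpace ℝ (Fin 2)) (n : ℕ) :
    |perim Z n ω - 2 * n * ‖m‖| ≤
      2 * Real.pi *
        (range (n + 1)).sup' nonempty_range_add_one fun i => ‖walk Z i ω - (i : ℝ) • m‖ := by
  set δ := (range (n + 1)).sup' nonempty_range_add_one fun i => ‖walk Z i ω - (i : ℝ) • m‖
  have hline : 2 * n * ‖m‖ = ∫ θ in (0:ℝ)..Real.pi, width (fun i => ⟪(i : ℝ) • m, dir θ⟫) n := by
    simp only [real_inner_smul_left, width_natCast_mul, intervalIntegral.integral_const_mul,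
      integral_abs_inner_dir]
    ring
  have hint : ∀ v : ℕ → EuclideanSpace ℝ (Fin 2),
      IntervalIntegrable (fun θ => width (fun i => ⟪v i, dir θ⟫) n) volume 0 Real.pi :=
    fun v => (continuous_width (fun i => continuous_inner_dir (v i)) n).intervalIntegrable _ _
  rw [perim_eq_integral_width, hline, ← intervalIntegral.integral_sub (hint _) (hint _),
    ← Real.norm_eq_abs]
  refine (intervalIntegral.norm_integral_le_of_norm_le_const (C := 2 * δ) fun θ _ => ?_).trans_eq
    (by rw [sub_zero, abs_of_pos Real.pi_pos]; ring)
  refine abs_width_sub_width_le fun i hi => ?_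
  calc |⟪walk Z i ω, dir θ⟫ - ⟪(i : ℝ) • m, dir θ⟫|
      = |⟪walk Z i ω - (i : ℝ) • m, dir θ⟫| := by rw [inner_sub_left]
    _ ≤ ‖walk Z i ω - (i : ℝ) • m‖ * ‖dir θ‖ := abs_real_inner_le_norm _ _
    _ ≤ δ := by
      rw [norm_dir, mul_one]
      exact le_sup' (fun i : ℕ => ‖walk Z i ω - (i : ℝ) • m‖) (mem_range_succ_iff.mpr hi)

theorem tendsto_perim_div_of_tendsto_walk_div {m : EuclideanSpace ℝ (Fin 2)}
    (h : Tendsto (fun n : ℕ => (n : ℝ)⁻¹ • walk Z n ω) atTop (𝓝 m)) :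
    Tendsto (fun n : ℕ => perim Z n ω / n) atTop (𝓝 (2 * ‖m‖)) := by
  have hdev : Tendsto (fun n : ℕ => ‖walk Z n ω - (n : ℝ) • m‖ / n) atTop (𝓝 0) := by
    have := (h.sub_const m).norm
    rw [sub_self, norm_zero] at this
    refine this.congr' ((eventually_gt_atTop 0).mono fun n hn => ?_)
    have hn' : (n : ℝ) ≠ 0 := by exact_mod_cast hn.ne'
    have hsmul : (n : ℝ)⁻¹ • walk Z n ω - m = (n : ℝ)⁻¹ • (walk Z n ω - (n : ℝ) • m) := by
      rw [smul_sub, inv_smul_smul₀ hn']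
    rw [hsmul, norm_smul, norm_inv, Real.norm_natCast, inv_mul_eq_div]
  have hbound := (tendsto_sup'_range_div_of_tendsto_div hdev).const_mul (2 * Real.pi)
  rw [mul_zero] at hbound
  rw [← tendsto_sub_nhds_zero_iff]
  refine squeeze_zero_norm' ((eventually_gt_atTop 0).mono fun n hn => ?_) hbound
  have hn' : (0 : ℝ) < n := by exact_mod_cast hn
  have hdiv : perim Z n ω / n - 2 * ‖m‖ = (perim Z n ω - 2 * n * ‖m‖) / n := by
    field_simp
  rw [hdiv, norm_div, Real.norm_eq_abs, Real.norm_natCast, ← mul_div_assoc]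
  exact div_le_div_of_nonneg_right (abs_perim_sub_le Z ω m n) hn'.le

end Walk

theorem perimeter_strong_law_general {Ω : Type*} [MeasurableSpace Ω]
    (P : Measure Ω) [IsProbabilityMeasure P]
    (Z : ℕ → Ω → EuclideanSpace ℝ (Fin 2))
    (hindep : iIndepFun Z P)
    (hident : ∀ i, IdentDistrib (Z i) (Z 0) P P)
    (hmom : Integrable (fun ω => ‖Z 0 ω‖ ^ 2) P) :
    ∀ᵐ ω ∂P, Tendsto (fun n : ℕ => perim Z n ω / (n : ℝ)) atTop
      (nhds (2 * ‖∫ ω', Z 0 ω' ∂P‖)) := by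
  have hint : Integrable (Z 0) P :=
    ((memLp_two_iff_integrable_sq_norm (hident 0).aemeasurable_fst.aestronglyMeasurable).2
      hmom).integrable one_le_two
  filter_upwards [strong_law_ae Z hint (fun i j hij => hindep.indepFun hij) hident] with ω hω
  exact tendsto_perim_div_of_tendsto_walk_div Z ω hω

/-- Strong law of large numbers for the perimeter length: `n⁻¹ L n → 2‖μ‖` a.s. -/
theorem perimeter_strong_law {Ω : Type*} [MeasurableSpace Ω]
    (P : Measure Ω) [IsProbabilityMeasure P]
    (Z : ℕ → Ω → EuclideanSpace ℝ (Fin 2))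
    (hmeas : ∀ i, Measurable (Z i))
    (hindep : iIndepFun Z P)
    (hident : ∀ i, IdentDistrib (Z i) (Z 0) P P)
    (hmom : Integrable (fun ω => ‖Z 0 ω‖ ^ 2) P) :
    ∀ᵐ ω ∂P, Tendsto (fun n : ℕ => perim Z n ω / (n : ℝ)) atTop
      (nhds (2 * ‖∫ ω', Z 0 ω' ∂P‖)) :=
  perimeter_strong_law_general P Z hindep hident hmom
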